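/- Under the Levi-Civita substitution r = ξ²/2, p_r = η/ξ, the Hamiltonian H(q,p,r,p_r) = r(a(q,r)p_r² + 2⟨p,b(q,r)⟩p_r + ⟨c(q,r)p,p⟩) becomes Ĥ(q,p,ξ,η) = (1/2)a(q,ξ²/2)η² + ⟨p,b(q,ξ²/2)⟩ξη + (1/2)⟨c(q,ξ²/2)p,p⟩ξ², which is a smooth function of (q,p,ξ,η) including at ξ = 0. -/
import Mathlib


/-- Under the Levi-Civita substitution `r = ξ²/2`, `p_r = η/ξ`, the Hamiltonian
`H(q,p,r,p_r) = r (a(q,r) p_r² + 2⟨p,b(q,r)⟩ p_r + ⟨c(q,r)p,p⟩)` becomes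
`Ĥ(q,p,ξ,η) = ½ a(q,ξ²/2) η² + ⟨p,b(q,ξ²/2)⟩ ξ η + ½ ⟨c(q,ξ²/2)p,p⟩ ξ²`,
which is a smooth function of `(q,p,ξ,η)` including at `ξ = 0`. -/
theorem levi_civita_regularized_hamiltonian (k : ℕ)
    (a : (Fin k → ℝ) × ℝ → ℝ) (b : (Fin k → ℝ) × ℝ → Fin k → ℝ)
    (c : (Fin k → ℝ) × ℝ → Fin k → Fin k → ℝ)
    (ha : ContDiff ℝ (⊤ : ℕ∞) a) (hb : ContDiff ℝ (⊤ : ℕ∞) b) (hc : ContDiff ℝ (⊤ : ℕ∞) c) :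
    (∀ (q p : Fin k → ℝ) (ξ η : ℝ), ξ ≠ 0 →
      (ξ ^ 2 / 2) * (a (q, ξ ^ 2 / 2) * (η / ξ) ^ 2
          + 2 * (∑ i, p i * b (q, ξ ^ 2 / 2) i) * (η / ξ)
          + ∑ i, ∑ j, c (q, ξ ^ 2 / 2) i j * p i * p j)
        = (1 / 2) * a (q, ξ ^ 2 / 2) * η ^ 2
          + (∑ i, p i * b (q, ξ ^ 2 / 2) i) * ξ * η
          + (1 / 2) * (∑ i, ∑ j, c (q, ξ ^ 2 / 2) i j * p i * p j) * ξ ^ 2) ∧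
    ContDiff ℝ (⊤ : ℕ∞) (fun z : (Fin k → ℝ) × (Fin k → ℝ) × ℝ × ℝ =>
      (1 / 2) * a (z.1, z.2.2.1 ^ 2 / 2) * z.2.2.2 ^ 2
        + (∑ i, z.2.1 i * b (z.1, z.2.2.1 ^ 2 / 2) i) * z.2.2.1 * z.2.2.2
        + (1 / 2) * (∑ i, ∑ j, c (z.1, z.2.2.1 ^ 2 / 2) i j * z.2.1 i * z.2.1 j)
            * z.2.2.1 ^ 2) := by
  constructor
  · intro q p ξ η hξ
    field_simp
  · have hφ : ContDiff ℝ (⊤ : ℕ∞) (fun z : (Fin k → ℝ) × (Fin k → ℝ) × ℝ × ℝ =>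
        ((z.1, z.2.2.1 ^ 2 / 2) : (Fin k → ℝ) × ℝ)) :=
      contDiff_fst.prodMk ((contDiff_snd.snd.fst.pow 2).div_const 2)
    have ha' := ha.comp hφ
    have hb' := hb.comp hφ
    have hc' := hc.comp hφ
    have hbi : ∀ i, ContDiff ℝ (⊤ : ℕ∞) (fun z : (Fin k → ℝ) × (Fin k → ℝ) × ℝ × ℝ =>
        b (z.1, z.2.2.1 ^ 2 / 2) i) := fun i => contDiff_pi.mp hb' i
    have hcij : ∀ i j, ContDiff ℝ (⊤ : ℕ∞) (fun z : (Fin k → ℝ) × (Fin k → ℝ) × ℝ × ℝ =>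
        c (z.1, z.2.2.1 ^ 2 / 2) i j) := fun i j =>
      contDiff_pi.mp (contDiff_pi.mp hc' i) j
    have hpi : ∀ i, ContDiff ℝ (⊤ : ℕ∞) (fun z : (Fin k → ℝ) × (Fin k → ℝ) × ℝ × ℝ =>
        z.2.1 i) := by intro i; fun_prop
    have hsum1 : ContDiff ℝ (⊤ : ℕ∞) (fun z : (Fin k → ℝ) × (Fin k → ℝ) × ℝ × ℝ =>
        ∑ i, z.2.1 i * b (z.1, z.2.2.1 ^ 2 / 2) i) :=
      ContDiff.sum (fun i _ => (hpi i).mul (hbi i))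
    have hsum2 : ContDiff ℝ (⊤ : ℕ∞) (fun z : (Fin k → ℝ) × (Fin k → ℝ) × ℝ × ℝ =>
        ∑ i, ∑ j, c (z.1, z.2.2.1 ^ 2 / 2) i j * z.2.1 i * z.2.1 j) :=
      ContDiff.sum (fun i _ => ContDiff.sum (fun j _ =>
        ((hcij i j).mul (hpi i)).mul (hpi j)))
    have hξη : ContDiff ℝ (⊤ : ℕ∞) (fun z : (Fin k → ℝ) × (Fin k → ℝ) × ℝ × ℝ => z.2.2.1) ∧
        ContDiff ℝ (⊤ : ℕ∞) (fun z : (Fin k → ℝ) × (Fin k → ℝ) × ℝ × ℝ => z.2.2.2) := by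
      constructor <;> fun_prop
    exact (((contDiff_const.mul ha').mul (hξη.2.pow 2)).add
      ((hsum1.mul hξη.1).mul hξη.2)).add
      ((contDiff_const.mul hsum2).mul (hξη.1.pow 2))
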